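/- With L, K, θ as above (L = (L₁;L₂) with unit vectors L₁,L₂, K = (L₁; e^{iθ}L₂), e^{iθ} ≠ ±1), and π = L K̄ᵗ s/(K̄ᵗ s L), π̃ = L L̄ᵗ/(L̄ᵗ L), π̃* = s π̃̄ᵗ s = sL L̄ᵗ s/(L̄ᵗL), one has π · π̃* = ((1+e^{iθ})/(2(1-e^{iθ}))) · L L̄ᵗ s, and this matrix N satisfies N² = 0 and N* = -N. -/

import Mathlib

open Matrix

/-- The matrix `s = diag(-I_p, I_q)` defining the signature-`(p,q)` Hermitian form on `ℂⁿ`. -/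
noncomputable def sig (p n : ℕ) : Matrix (Fin n) (Fin n) ℂ :=
  Matrix.diagonal fun i => if (i : ℕ) < p then -1 else 1

/-- The Hermitian form `⟨v,w⟩ = -∑_{i<p} v̄ᵢwᵢ + ∑_{i≥p} v̄ᵢwᵢ = v̄ᵗ s w`. -/
noncomputable def pqform (p n : ℕ) (v w : Fin n → ℂ) : ℂ :=
  star v ⬝ᵥ (sig p n *ᵥ w)

/-- The adjoint `A* = s Āᵗ s` with respect to the signature-`(p,q)` form. -/
noncomputable def pqadj (p n : ℕ) (A : Matrix (Fin n) (Fin n) ℂ) : Matrix (Fin n) (Fin n) ℂ :=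
  sig p n * Aᴴ * sig p n

/-!
Everything is rank one. With `W = L L̄ᵗ` one has `(u v̄ᵗ s)(w x̄ᵗ) = ⟨v, w⟩ u x̄ᵗ`, and `W` is
Hermitian, so `π π̃*` collapses to `(K̄ᵗ L) / (2 ⟨K, L⟩) • W s`. Since both blocks of `L` are unit
vectors, `L̄ᵗ L = 2`, `K̄ᵗ L = 1 + ē`, `⟨K, L⟩ = -1 + ē` and `⟨L, L⟩ = 0`; the last (isotropy)
gives `N² = 0`. Finally `W s` is self-adjoint for the form while `ē = e⁻¹` makes the coefficient
`(1 + e) / (2 (1 - e))` purely imaginary, whence `N* = -N`.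
-/

section SignatureForm

variable {p n : ℕ}

lemma sig_mul_sig : sig p n * sig p n = 1 := by
  rw [sig, diagonal_mul_diagonal, ← diagonal_one]
  congr 1
  ext i
  split_ifs <;> norm_num

lemma sig_mulVec (v : Fin n → ℂ) :
    sig p n *ᵥ v = fun i : Fin n => (if (i : ℕ) < p then -1 else 1) * v i :=
  funext (mulVec_diagonal _ v)

lemma sig_conjTranspose : (sig p n)ᴴ = sig p n := by
  rw [sig, diagonal_conjTranspose]
  congr 1
  ext i
  by_cases h : (i : ℕ) < p <;> simp [h]

lemma pqadj_smul (c : ℂ) (A : Matrix (Fin n) (Fin n) ℂ) :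
    pqadj p n (c • A) = star c • pqadj p n A := by
  rw [pqadj, pqadj, conjTranspose_smul, Matrix.mul_smul, Matrix.smul_mul]

lemma pqadj_mul_sig (A : Matrix (Fin n) (Fin n) ℂ) :
    pqadj p n (A * sig p n) = Aᴴ * sig p n := by
  rw [pqadj, conjTranspose_mul, sig_conjTranspose, ← Matrix.mul_assoc, sig_mul_sig,
    Matrix.one_mul]

lemma pqadj_vecMulVec_star_self (w : Fin n → ℂ) :
    pqadj p n (vecMulVec w (star w)) = sig p n * vecMulVec w (star w) * sig p n := by
  rw [pqadj, conjTranspose_vecMulVec, star_star]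

lemma vecMulVec_mul_sig_mul_vecMulVec (u v w x : Fin n → ℂ) :
    vecMulVec u (star v) * sig p n * vecMulVec w x = pqform p n v w • vecMulVec u x := by
  rw [vecMulVec_mul, vecMulVec_mul_vecMulVec, ← dotProduct_mulVec, vecMulVec_smul, pqform]

lemma vecMulVec_mul_sig_mul_pqadj_vecMulVec (u v w : Fin n → ℂ) :
    vecMulVec u v * sig p n * pqadj p n (vecMulVec w (star w)) =
      (v ⬝ᵥ w) • (vecMulVec u (star w) * sig p n) := by
  simp only [pqadj_vecMulVec_star_self, Matrix.mul_assoc]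
  rw [← Matrix.mul_assoc (sig p n) (sig p n), sig_mul_sig, Matrix.one_mul, ← Matrix.mul_assoc,
    vecMulVec_mul_vecMulVec, vecMulVec_smul, Matrix.smul_mul]

lemma sum_ite_mul_star_mul_self {L : Fin n → ℂ}
    (hL1 : ∑ i : Fin n, (if (i : ℕ) < p then ‖L i‖ ^ 2 else 0) = 1)
    (hL2 : ∑ i : Fin n, (if (i : ℕ) < p then 0 else ‖L i‖ ^ 2) = 1) (a b : ℂ) :
    ∑ i : Fin n, (if (i : ℕ) < p then a else b) * (star (L i) * L i) = a + b := by
  have hsplit : ∀ i : Fin n, (if (i : ℕ) < p then a else b) * (star (L i) * L i) =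
      a * ((if (i : ℕ) < p then ‖L i‖ ^ 2 else 0 : ℝ) : ℂ) +
        b * ((if (i : ℕ) < p then 0 else ‖L i‖ ^ 2 : ℝ) : ℂ) := by
    intro i
    rw [RCLike.star_def, Complex.conj_mul']
    split_ifs <;> simp
  simp only [hsplit, Finset.sum_add_distrib, ← Finset.mul_sum, ← Complex.ofReal_sum, hL1, hL2,
    Complex.ofReal_one, mul_one]

lemma star_dotProduct_self_eq_two {L : Fin n → ℂ}
    (hL1 : ∑ i : Fin n, (if (i : ℕ) < p then ‖L i‖ ^ 2 else 0) = 1)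
    (hL2 : ∑ i : Fin n, (if (i : ℕ) < p then 0 else ‖L i‖ ^ 2) = 1) :
    star L ⬝ᵥ L = 2 := by
  rw [← one_add_one_eq_two, ← sum_ite_mul_star_mul_self hL1 hL2]
  simp [dotProduct]

lemma pqform_self_eq_zero {L : Fin n → ℂ}
    (hL1 : ∑ i : Fin n, (if (i : ℕ) < p then ‖L i‖ ^ 2 else 0) = 1)
    (hL2 : ∑ i : Fin n, (if (i : ℕ) < p then 0 else ‖L i‖ ^ 2) = 1) :
    pqform p n L L = 0 := by
  rw [← neg_add_cancel 1, ← sum_ite_mul_star_mul_self hL1 hL2, pqform, sig_mulVec]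
  refine Finset.sum_congr rfl fun i _ => ?_
  simp only [Pi.star_apply]
  ring

lemma star_dotProduct_eq_one_add_star {L : Fin n → ℂ}
    (hL1 : ∑ i : Fin n, (if (i : ℕ) < p then ‖L i‖ ^ 2 else 0) = 1)
    (hL2 : ∑ i : Fin n, (if (i : ℕ) < p then 0 else ‖L i‖ ^ 2) = 1) (e : ℂ) :
    star (fun i : Fin n => if (i : ℕ) < p then L i else e * L i) ⬝ᵥ L = 1 + star e := by
  rw [← sum_ite_mul_star_mul_self hL1 hL2]
  refine Finset.sum_congr rfl fun i _ => ?_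
  by_cases h : (i : ℕ) < p <;> simp [h, mul_assoc]

lemma pqform_eq_neg_one_add_star {L : Fin n → ℂ}
    (hL1 : ∑ i : Fin n, (if (i : ℕ) < p then ‖L i‖ ^ 2 else 0) = 1)
    (hL2 : ∑ i : Fin n, (if (i : ℕ) < p then 0 else ‖L i‖ ^ 2) = 1) (e : ℂ) :
    pqform p n (fun i : Fin n => if (i : ℕ) < p then L i else e * L i) L = -1 + star e := by
  rw [← sum_ite_mul_star_mul_self hL1 hL2, pqform, sig_mulVec]
  refine Finset.sum_congr rfl fun i _ => ?_
  by_cases h : (i : ℕ) < p <;> simp [h, mul_assoc]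

end SignatureForm

lemma star_one_add_div_two_mul_one_sub {e : ℂ} (he : ‖e‖ = 1) (he1 : e ≠ 1) :
    star ((1 + e) / (2 * (1 - e))) = -((1 + e) / (2 * (1 - e))) := by
  have he0 : e ≠ 0 := by rintro rfl; simp at he
  have h1e : 1 - e ≠ 0 := sub_ne_zero.mpr he1.symm
  rw [RCLike.star_def, map_div₀, map_mul, map_add, map_sub, map_one, map_ofNat,
    ← RCLike.inv_eq_conj he]
  field_simp
  ring

theorem stmt_11_general (p n : ℕ) (θ : ℝ)
    (hθ1 : Complex.exp ((θ : ℂ) * Complex.I) ≠ 1)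
    (L : Fin n → ℂ)
    (hL1 : ∑ i : Fin n, (if (i : ℕ) < p then ‖L i‖ ^ 2 else 0) = 1)
    (hL2 : ∑ i : Fin n, (if (i : ℕ) < p then 0 else ‖L i‖ ^ 2) = 1)
    (K : Fin n → ℂ)
    (hK : K = fun i : Fin n => if (i : ℕ) < p then L i else Complex.exp ((θ : ℂ) * Complex.I) * L i)
    (π πt N : Matrix (Fin n) (Fin n) ℂ)
    (hπ : π = (pqform p n K L)⁻¹ • (Matrix.vecMulVec L (star K) * sig p n))
    (hπt : πt = (star L ⬝ᵥ L)⁻¹ • Matrix.vecMulVec L (star L))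
    (hN : N = ((1 + Complex.exp ((θ : ℂ) * Complex.I)) /
        (2 * (1 - Complex.exp ((θ : ℂ) * Complex.I)))) •
      (Matrix.vecMulVec L (star L) * sig p n)) :
    π * pqadj p n πt = N ∧ N * N = 0 ∧ pqadj p n N = -N := by
  set e := Complex.exp ((θ : ℂ) * Complex.I)
  have he : ‖e‖ = 1 := Complex.norm_exp_ofReal_mul_I θ
  subst hK
  refine ⟨?_, ?_, ?_⟩
  · rw [hπ, hπt, hN, Matrix.smul_mul, pqadj_smul, Matrix.mul_smul,
      vecMulVec_mul_sig_mul_pqadj_vecMulVec, smul_smul, smul_smul,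
      pqform_eq_neg_one_add_star hL1 hL2, star_dotProduct_self_eq_two hL1 hL2,
      star_dotProduct_eq_one_add_star hL1 hL2]
    congr 1
    have he0 : e ≠ 0 := Complex.exp_ne_zero _
    have h1e : 1 - e ≠ 0 := sub_ne_zero.mpr (Ne.symm hθ1)
    have hform : -1 + e⁻¹ = (1 - e) / e := by field_simp; ring
    rw [RCLike.star_def, ← RCLike.inv_eq_conj he, map_inv₀, map_ofNat, hform]
    field_simp
    ring
  · rw [hN, smul_mul_smul_comm, ← Matrix.mul_assoc, vecMulVec_mul_sig_mul_vecMulVec,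
      pqform_self_eq_zero hL1 hL2, zero_smul, Matrix.zero_mul, smul_zero]
  · rw [hN, pqadj_smul, pqadj_mul_sig, conjTranspose_vecMulVec, star_star,
      star_one_add_div_two_mul_one_sub he hθ1, neg_smul]

theorem stmt_11 (p q n : ℕ) (hn : n = p + q) (θ : ℝ)
    (hθ1 : Complex.exp ((θ : ℂ) * Complex.I) ≠ 1)
    (hθ2 : Complex.exp ((θ : ℂ) * Complex.I) ≠ -1)
    (L : Fin n → ℂ)
    (hL1 : ∑ i : Fin n, (if (i : ℕ) < p then ‖L i‖ ^ 2 else 0) = 1)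
    (hL2 : ∑ i : Fin n, (if (i : ℕ) < p then 0 else ‖L i‖ ^ 2) = 1)
    (K : Fin n → ℂ)
    (hK : K = fun i : Fin n => if (i : ℕ) < p then L i else Complex.exp ((θ : ℂ) * Complex.I) * L i)
    (π πt N : Matrix (Fin n) (Fin n) ℂ)
    (hπ : π = (pqform p n K L)⁻¹ • (Matrix.vecMulVec L (star K) * sig p n))
    (hπt : πt = (star L ⬝ᵥ L)⁻¹ • Matrix.vecMulVec L (star L))
    (hN : N = ((1 + Complex.exp ((θ : ℂ) * Complex.I)) /
        (2 * (1 - Complex.exp ((θ : ℂ) * Complex.I)))) •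
      (Matrix.vecMulVec L (star L) * sig p n)) :
    π * pqadj p n πt = N ∧ N * N = 0 ∧ pqadj p n N = -N :=
  stmt_11_general p n θ hθ1 L hL1 hL2 K hK π πt N hπ hπt hN
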